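/- arXiv:math/0012126 — 4 statements merged into one kernel-verified Lean document; each statement's English description precedes it below -/
import Mathlib

section
/- Let a, b, c be positive integers. Then the horizontal moment of inertia with respect to the centre S = ((a+b)/2, (a+c)/2) of the hexagon satisfies: Σ_{x=1}^{a+b-1} Σ_{y=0}^{a+c-1} P_{a,b,c}(x,y) · (x − (a+b)/2)² = (1/12) · a · b · (a² + b² − 2). -/
open Finset

/-- Plane partitions in an `a × b × c` box: assignments of entries in `{0, …, c}` to the
cells of an `a × b` rectangle with weakly decreasing rows and columns. -/
def PlanePartitions (a b c : ℕ) : Finset (Fin a → Fin b → Fin (c + 1)) :=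
  univ.filter (fun T =>
    (∀ i : Fin a, ∀ j j' : Fin b, j ≤ j' → T i j' ≤ T i j) ∧
    (∀ i i' : Fin a, ∀ j : Fin b, i ≤ i' → T i' j ≤ T i j))

/-- `P a b c x y` is the probability that a uniformly random lozenge tiling of the hexagon
with side lengths `a, b, c, a, b, c` contains the horizontal lozenge with lowest vertex
`(x, y)`: the cell `(i, j)` (1-based) of a plane partition `T` contributes the horizontal
lozenge with lowest vertex `(j - i + a, T(i,j) + a - i)`. -/
def P (a b c : ℕ) (x y : ℤ) : ℚ :=
  (∑ T ∈ PlanePartitions a b c,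
      ((univ.filter (fun p : Fin a × Fin b =>
          ((p.2 : ℕ) : ℤ) - ((p.1 : ℕ) : ℤ) + (a : ℤ) = x ∧
          ((T p.1 p.2 : ℕ) : ℤ) + (a : ℤ) - (((p.1 : ℕ) : ℤ) + 1) = y)).card : ℚ))
    / ((PlanePartitions a b c).card : ℚ)

/-! Each plane partition `T` has exactly one horizontal lozenge per cell `(i, j)`, inside the
summation range, and its abscissa `j - i + a` does not depend on `T`. Hence the moment equals, for
every `T` and so on average, `∑ ((j - (b-1)/2) - (i - (a-1)/2))²` over the cells: the centred
coordinates have zero sums, so this is `a · b(b² - 1)/12 + b · a(a² - 1)/12`. -/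

theorem sum_card_fiber_mul_of_maps_to {ι κ R : Type*} [DecidableEq κ] [CommSemiring R]
    {s : Finset ι} {t : Finset κ} {g : ι → κ} (h : ∀ i ∈ s, g i ∈ t) (w : κ → R) :
    ∑ j ∈ t, (#{i ∈ s | g i = j} : R) * w j = ∑ i ∈ s, w (g i) := by
  simp_rw [← sum_fiberwise_of_maps_to' h w, sum_const, nsmul_eq_mul]

theorem sum_range_cast_id (n : ℕ) : ∑ j ∈ range n, (j : ℚ) = n * (n - 1) / 2 := by
  induction n with
  | zero => simp
  | succ n ih => rw [sum_range_succ, ih]; push_cast; ring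

theorem sum_range_cast_sq (n : ℕ) :
    ∑ j ∈ range n, (j : ℚ) ^ 2 = n * (n - 1) * (2 * n - 1) / 6 := by
  induction n with
  | zero => simp
  | succ n ih => rw [sum_range_succ, ih]; push_cast; ring

theorem sum_range_sub_half (n : ℕ) : ∑ j ∈ range n, ((j : ℚ) - (n - 1) / 2) = 0 := by
  rw [sum_sub_distrib, sum_range_cast_id, sum_const, card_range, nsmul_eq_mul]
  ring

theorem sum_range_sub_half_sq (n : ℕ) :
    ∑ j ∈ range n, ((j : ℚ) - (n - 1) / 2) ^ 2 = (n : ℚ) * (n ^ 2 - 1) / 12 := by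
  simp only [sub_sq, sum_add_distrib, sum_sub_distrib, ← sum_mul, ← mul_sum, sum_const,
    card_range, nsmul_eq_mul, sum_range_cast_id, sum_range_cast_sq]
  ring

theorem sum_range_sub_half_sub_sq (n : ℕ) (v : ℚ) :
    ∑ j ∈ range n, ((j : ℚ) - (n - 1) / 2 - v) ^ 2
      = (n : ℚ) * (n ^ 2 - 1) / 12 + n * v ^ 2 := by
  have expand : ∀ u : ℚ, (u - v) ^ 2 = u ^ 2 - 2 * v * u + v ^ 2 := fun u => by ring
  rw [sum_congr rfl fun (j : ℕ) _ => expand ((j : ℚ) - (n - 1) / 2), sum_add_distrib,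
    sum_sub_distrib, ← mul_sum, sum_range_sub_half, sum_range_sub_half_sq, sum_const, card_range,
    nsmul_eq_mul]
  ring

theorem sum_sq_centred_sub_centred (a b : ℕ) :
    ∑ i ∈ range a, ∑ j ∈ range b, ((j : ℚ) - (b - 1) / 2 - ((i : ℚ) - (a - 1) / 2)) ^ 2
      = (a : ℚ) * b * (a ^ 2 + b ^ 2 - 2) / 12 := by
  simp only [sum_range_sub_half_sub_sq, sum_add_distrib, sum_const, card_range, nsmul_eq_mul,
    ← mul_sum, sum_range_sub_half_sq]
  ring

def horizontalLozenge {a b c : ℕ} (T : Fin a → Fin b → Fin (c + 1)) (p : Fin a × Fin b) :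
    ℤ × ℤ :=
  (((p.2 : ℕ) : ℤ) - ((p.1 : ℕ) : ℤ) + a,
    ((T p.1 p.2 : ℕ) : ℤ) + a - (((p.1 : ℕ) : ℤ) + 1))

theorem P_eq_sum_card_div (a b c : ℕ) (x y : ℤ) :
    P a b c x y = (∑ T ∈ PlanePartitions a b c,
      (#{p | horizontalLozenge T p = (x, y)} : ℚ)) / #(PlanePartitions a b c) := by
  simp only [P, horizontalLozenge, Prod.mk.injEq]

theorem horizontalLozenge_mem_box {a b c : ℕ} (T : Fin a → Fin b → Fin (c + 1))
    (p : Fin a × Fin b) :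
    horizontalLozenge T p ∈ Icc (1 : ℤ) (a + b - 1) ×ˢ Icc (0 : ℤ) (a + c - 1) := by
  have := p.1.isLt; have := p.2.isLt; have := (T p.1 p.2).isLt
  simp only [horizontalLozenge, mem_product, mem_Icc]
  omega

theorem sum_sq_horizontalLozenge_fst_sub {a b c : ℕ} (T : Fin a → Fin b → Fin (c + 1)) :
    ∑ p, (((horizontalLozenge T p).1 : ℚ) - ((a : ℚ) + b) / 2) ^ 2
      = (1 / 12 : ℚ) * a * b * ((a : ℚ) ^ 2 + (b : ℚ) ^ 2 - 2) := by
  have centred : ∀ (i : Fin a) (j : Fin b),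
      ((horizontalLozenge T (i, j)).1 : ℚ) - ((a : ℚ) + b) / 2
        = (j : ℕ) - ((b : ℚ) - 1) / 2 - (((i : ℕ) : ℚ) - (a - 1) / 2) := fun i j => by
    simp only [horizontalLozenge]; push_cast; ring
  calc ∑ p, (((horizontalLozenge T p).1 : ℚ) - ((a : ℚ) + b) / 2) ^ 2
      = ∑ i : Fin a, ∑ j : Fin b,
          (((j : ℕ) : ℚ) - (b - 1) / 2 - ((i : ℕ) - (a - 1) / 2)) ^ 2 := by
        rw [Fintype.sum_prod_type]; simp only [centred]
    _ = ∑ i ∈ range a, ∑ j ∈ range b,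
          ((j : ℚ) - (b - 1) / 2 - (i - (a - 1) / 2)) ^ 2 := by
        rw [Fin.sum_univ_eq_sum_range
          (fun i => ∑ j : Fin b, (((j : ℕ) : ℚ) - (b - 1) / 2 - (i - (a - 1) / 2)) ^ 2)]
        exact sum_congr rfl fun i _ =>
          Fin.sum_univ_eq_sum_range (fun j => ((j : ℚ) - (b - 1) / 2 - (i - (a - 1) / 2)) ^ 2) b
    _ = _ := by rw [sum_sq_centred_sub_centred]; ring

theorem sum_card_horizontalLozenge_mul {a b c : ℕ} (T : Fin a → Fin b → Fin (c + 1)) :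
    ∑ x ∈ Icc (1 : ℤ) (a + b - 1), ∑ y ∈ Icc (0 : ℤ) (a + c - 1),
        (#{p | horizontalLozenge T p = (x, y)} : ℚ) * ((x : ℚ) - ((a : ℚ) + b) / 2) ^ 2
      = (1 / 12 : ℚ) * a * b * ((a : ℚ) ^ 2 + (b : ℚ) ^ 2 - 2) := by
  rw [← sum_product' (f := fun x y =>
      (#{p | horizontalLozenge T p = (x, y)} : ℚ) * ((x : ℚ) - ((a : ℚ) + b) / 2) ^ 2),
    sum_card_fiber_mul_of_maps_to (fun p _ => horizontalLozenge_mem_box T p)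
      (fun z => ((z.1 : ℚ) - ((a : ℚ) + b) / 2) ^ 2)]
  exact sum_sq_horizontalLozenge_fst_sub T

theorem zero_mem_planePartitions (a b c : ℕ) : 0 ∈ PlanePartitions a b c := by
  simp [PlanePartitions]

theorem horizontal_moment_of_inertia_general (a b c : ℕ) :
    ∑ x ∈ Finset.Icc (1 : ℤ) ((a : ℤ) + b - 1),
      ∑ y ∈ Finset.Icc (0 : ℤ) ((a : ℤ) + c - 1),
        P a b c x y * ((x : ℚ) - ((a : ℚ) + b) / 2) ^ 2
      = (1 / 12 : ℚ) * a * b * ((a : ℚ) ^ 2 + (b : ℚ) ^ 2 - 2) := by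
  have hN : (#(PlanePartitions a b c) : ℚ) ≠ 0 := by
    exact_mod_cast (card_pos.2 ⟨0, zero_mem_planePartitions a b c⟩).ne'
  calc ∑ x ∈ Icc (1 : ℤ) (a + b - 1), ∑ y ∈ Icc (0 : ℤ) (a + c - 1),
        P a b c x y * ((x : ℚ) - ((a : ℚ) + b) / 2) ^ 2
      = (∑ T ∈ PlanePartitions a b c, ∑ x ∈ Icc (1 : ℤ) (a + b - 1),
          ∑ y ∈ Icc (0 : ℤ) (a + c - 1),
            (#{p | horizontalLozenge T p = (x, y)} : ℚ) * ((x : ℚ) - ((a : ℚ) + b) / 2) ^ 2)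
          / (#(PlanePartitions a b c) : ℚ) := by
        rw [sum_comm (s := PlanePartitions a b c), sum_div]
        refine sum_congr rfl fun x _ => ?_
        rw [sum_comm (s := PlanePartitions a b c), sum_div]
        refine sum_congr rfl fun y _ => ?_
        rw [P_eq_sum_card_div, div_mul_eq_mul_div, sum_mul]
    _ = _ := by
        rw [sum_congr rfl fun T _ => sum_card_horizontalLozenge_mul T, sum_const, nsmul_eq_mul]
        field_simp

theorem horizontal_moment_of_inertia (a b c : ℕ) (ha : 0 < a) (hb : 0 < b) (hc : 0 < c) :
    ∑ x ∈ Finset.Icc (1 : ℤ) ((a : ℤ) + b - 1),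
      ∑ y ∈ Finset.Icc (0 : ℤ) ((a : ℤ) + c - 1),
        P a b c x y * ((x : ℚ) - ((a : ℚ) + b) / 2) ^ 2
      = (1 / 12 : ℚ) * a * b * ((a : ℚ) ^ 2 + (b : ℚ) ^ 2 - 2) :=
  horizontal_moment_of_inertia_general a b c
end

section
/- Let a, b, c be positive integers and let y₀ be an integer with 0 ≤ y₀ ≤ a+c−1. Then Σ_{x=1}^{a+b-1} P_{a,b,c}(x, y₀) = a·b/(a+c). -/
open Finset

/-!
Encode a plane partition `T` by its slices: `f i v` is the number of entries `≥ v` in row `i`.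
This is a function on `ℤ²`, antitone in both variables, with fixed values outside the box, and
the number of horizontal lozenges at height `y` is the difference of the sums of `f` along two
consecutive diagonals `v - i = const`. Reflecting every value on one diagonal inside the interval
allowed by its four neighbours (a Bender–Knuth move) is an involution of plane partitions, and
by telescoping it exchanges the numbers of lozenges at heights `y` and `y + 1`. Hence the
expected number of horizontal lozenges at height `y` is the same for all `a + c` heights
`0 ≤ y < a + c`; since every tiling has `a * b` horizontal lozenges, each expectation is
`a * b / (a + c)`.
-/

lemma exists_fin_eq_of_nonneg_of_lt {n : ℕ} {i : ℤ} (h₀ : 0 ≤ i) (h : i < n) :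
    ∃ k : Fin n, i = (k : ℕ) :=
  ⟨⟨i.toNat, by omega⟩, by simp [h₀]⟩

lemma card_filter_le_eq_card_filter_eq_add {ι : Type*} [DecidableEq ι] (s : Finset ι)
    (g : ι → ℤ) (w : ℤ) :
    #{j ∈ s | w ≤ g j} = #{j ∈ s | g j = w} + #{j ∈ s | w + 1 ≤ g j} := by
  rw [← card_union_of_disjoint (disjoint_filter.2 fun _ _ h => by omega), ← filter_or]
  exact congrArg card (filter_congr fun _ _ => by omega)

lemma sum_range_max_add_min (A B : ℤ → ℤ) (n : ℕ) (h₀ : B 0 ≤ A (-1))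
    (hn : B n ≤ A (n - 1)) :
    ∑ i ∈ range n, (max (A i) (B (i + 1)) + min (A (i - 1)) (B i))
      = ∑ i ∈ range n, (A i + B i) := by
  have key : ∀ m : ℕ, ∑ i ∈ range m, (max (A i) (B (i + 1)) + min (A (i - 1)) (B i))
      + min (A (m - 1)) (B m)
        = ∑ i ∈ range m, (A i + B i) + B m - B 0 + min (A (-1)) (B 0) := by
    intro m
    induction m with
    | zero => simp
    | succ m ih =>
      simp only [sum_range_succ, Nat.cast_add, Nat.cast_one, add_sub_cancel_right]
      have := min_add_max (A m) (B (m + 1))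
      linarith
  have := key n
  rw [min_eq_right hn, min_eq_right h₀] at this
  linarith

section DiagonalToggle

/-- The piecewise-linear toggle of all points of the diagonal `v - i = d` at once. No two of
them are neighbours, so each value is reflected in the interval cut out by four values that the
toggle leaves unchanged. -/
def toggleDiag (d : ℤ) (f : ℤ → ℤ → ℤ) (i v : ℤ) : ℤ :=
  if v - i = d then
    max (f i (v + 1)) (f (i + 1) v) + min (f (i - 1) v) (f i (v - 1)) - f i v
  else f i v

variable {d : ℤ} {f : ℤ → ℤ → ℤ}

lemma toggleDiag_of_ne {i v : ℤ} (h : v - i ≠ d) : toggleDiag d f i v = f i v := if_neg h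

lemma toggleDiag_toggleDiag : toggleDiag d (toggleDiag d f) = f := by
  funext i v
  by_cases h : v - i = d
  · rw [toggleDiag, if_pos h, toggleDiag_of_ne (by omega), toggleDiag_of_ne (by omega),
      toggleDiag_of_ne (by omega), toggleDiag_of_ne (by omega), toggleDiag, if_pos h]
    ring
  · rw [toggleDiag_of_ne h, toggleDiag_of_ne h]

lemma max_le_toggleDiag (hrow : Antitone f) (hcol : ∀ i, Antitone (f i)) {i v : ℤ}
    (h : v - i = d) : max (f i (v + 1)) (f (i + 1) v) ≤ toggleDiag d f i v := by
  have : f i v ≤ min (f (i - 1) v) (f i (v - 1)) :=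
    le_min (hrow (by omega) v) (hcol i (by omega))
  rw [toggleDiag, if_pos h]
  omega

lemma toggleDiag_le_min (hrow : Antitone f) (hcol : ∀ i, Antitone (f i)) {i v : ℤ}
    (h : v - i = d) : toggleDiag d f i v ≤ min (f (i - 1) v) (f i (v - 1)) := by
  have : max (f i (v + 1)) (f (i + 1) v) ≤ f i v :=
    max_le (hcol i (by omega)) (hrow (by omega) v)
  rw [toggleDiag, if_pos h]
  omega

lemma antitone_toggleDiag (hrow : Antitone f) (hcol : ∀ i, Antitone (f i)) :
    Antitone (toggleDiag d f) := by
  refine antitone_int_of_succ_le fun i v => ?_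
  by_cases h : v - i = d
  · rw [toggleDiag_of_ne (by omega)]
    exact (le_max_right _ _).trans (max_le_toggleDiag hrow hcol h)
  by_cases h' : v - (i + 1) = d
  · rw [toggleDiag_of_ne h]
    exact (toggleDiag_le_min hrow hcol h').trans (by simp)
  · rw [toggleDiag_of_ne h, toggleDiag_of_ne h']
    exact hrow (by omega) v

lemma antitone_toggleDiag_apply (hrow : Antitone f) (hcol : ∀ i, Antitone (f i)) (i : ℤ) :
    Antitone (toggleDiag d f i) := by
  refine antitone_int_of_succ_le fun v => ?_
  by_cases h : v - i = d
  · rw [toggleDiag_of_ne (by omega)]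
    exact (le_max_left _ _).trans (max_le_toggleDiag hrow hcol h)
  by_cases h' : v + 1 - i = d
  · rw [toggleDiag_of_ne h]
    exact (toggleDiag_le_min hrow hcol h').trans (by simp)
  · rw [toggleDiag_of_ne h, toggleDiag_of_ne h']
    exact hcol i (by omega)

def diagSum (n : ℕ) (f : ℤ → ℤ → ℤ) (d : ℤ) : ℤ := ∑ i ∈ range n, f i (d + i)

lemma diagSum_toggleDiag_of_ne (n : ℕ) {d' : ℤ} (h : d' ≠ d) :
    diagSum n (toggleDiag d f) d' = diagSum n f d' :=
  sum_congr rfl fun _ _ => toggleDiag_of_ne (by omega)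

lemma diagSum_toggleDiag (n : ℕ) (h₀ : f 0 (d - 1) ≤ f (-1) d)
    (hn : f n (d + n - 1) ≤ f (n - 1) (d + n)) :
    diagSum n (toggleDiag d f) d
      = diagSum n f (d + 1) + diagSum n f (d - 1) - diagSum n f d := by
  have hterm : ∀ i : ℤ, toggleDiag d f i (d + i) =
      max (f i (d + 1 + i)) (f (i + 1) (d - 1 + (i + 1)))
        + min (f (i - 1) (d + 1 + (i - 1))) (f i (d - 1 + i)) - f i (d + i) := by
    intro i
    rw [toggleDiag, if_pos (by ring)]
    ring_nf
  have := sum_range_max_add_min (fun i => f i (d + 1 + i)) (fun i => f i (d - 1 + i)) n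
    (by simpa using h₀) (by convert hn using 2 <;> ring)
  simp only [diagSum, hterm, sum_sub_distrib, this, sum_add_distrib]

end DiagonalToggle

structure IsSliceFunction (a b c : ℕ) (f : ℤ → ℤ → ℤ) : Prop where
  antitone : Antitone f
  antitone_apply : ∀ i, Antitone (f i)
  apply_of_neg : ∀ i < 0, ∀ v, f i v = b
  apply_of_ge : ∀ i ≥ (a : ℤ), ∀ v, f i v = 0
  apply_of_nonpos : ∀ i < (a : ℤ), ∀ v ≤ 0, f i v = b
  apply_of_gt : ∀ i ≥ 0, ∀ v > (c : ℤ), f i v = 0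

namespace IsSliceFunction

variable {a b c : ℕ} {f : ℤ → ℤ → ℤ}

lemma nonneg (hf : IsSliceFunction a b c f) (i v : ℤ) : 0 ≤ f i v := by
  by_cases hi : i < a
  · exact (hf.apply_of_ge a le_rfl v).symm.le.trans (hf.antitone hi.le v)
  · exact (hf.apply_of_ge i (by omega) v).symm.le

lemma le (hf : IsSliceFunction a b c f) (i v : ℤ) : f i v ≤ b := by
  by_cases hi : i < 0
  · exact (hf.apply_of_neg i hi v).le
  · exact (hf.antitone (by omega : (-1 : ℤ) ≤ i) v).trans
      (hf.apply_of_neg (-1) (by omega) v).le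

lemma toggleDiag (hf : IsSliceFunction a b c f) {d : ℤ} (hd₀ : 2 - a ≤ d) (hd₁ : d ≤ c) :
    IsSliceFunction a b c (toggleDiag d f) := by
  have squeeze : ∀ {i v x : ℤ}, v - i = d → x ≤ max (f i (v + 1)) (f (i + 1) v) →
      min (f (i - 1) v) (f i (v - 1)) ≤ x → _root_.toggleDiag d f i v = x := fun h hx hx' =>
    le_antisymm (hx'.trans' (toggleDiag_le_min hf.antitone hf.antitone_apply h))
      (hx.trans (max_le_toggleDiag hf.antitone hf.antitone_apply h))
  refine ⟨antitone_toggleDiag hf.antitone hf.antitone_apply,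
    antitone_toggleDiag_apply hf.antitone hf.antitone_apply, ?_, ?_, ?_, ?_⟩
  · intro i hi v
    by_cases h : v - i = d
    · exact squeeze h (le_max_of_le_left (hf.apply_of_neg i hi _).ge)
        (min_le_of_left_le (hf.le _ _))
    · rw [toggleDiag_of_ne h, hf.apply_of_neg i hi]
  · intro i hi v
    by_cases h : v - i = d
    · exact squeeze h (le_max_of_le_left (hf.nonneg _ _))
        (min_le_of_right_le (hf.apply_of_ge i hi _).le)
    · rw [toggleDiag_of_ne h, hf.apply_of_ge i hi]
  · intro i hi v hv
    by_cases h : v - i = d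
    · exact squeeze h (le_max_of_le_right (hf.apply_of_nonpos (i + 1) (by omega) v hv).ge)
        (min_le_of_left_le (hf.le _ _))
    · rw [toggleDiag_of_ne h, hf.apply_of_nonpos i hi v hv]
  · intro i hi v hv
    by_cases h : v - i = d
    · exact squeeze h (le_max_of_le_left (hf.nonneg _ _))
        (min_le_of_left_le (hf.apply_of_gt (i - 1) (by omega) v hv).le)
    · rw [toggleDiag_of_ne h, hf.apply_of_gt i hi v hv]

lemma diagSum_toggleDiag (hf : IsSliceFunction a b c f) (d : ℤ) :
    diagSum a (_root_.toggleDiag d f) d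
      = diagSum a f (d + 1) + diagSum a f (d - 1) - diagSum a f d :=
  _root_.diagSum_toggleDiag a ((hf.le _ _).trans (hf.apply_of_neg (-1) (by omega) d).ge)
    ((hf.apply_of_ge a le_rfl _).trans_le (hf.nonneg _ _))

end IsSliceFunction

section Slices

variable {a b c : ℕ}

/-- The length of row `i` of the slice `{(i, j) | v ≤ T i j}`, extended to all rows `i : ℤ`
by a full row `-1` and empty rows `i ≥ a`. -/
def sliceRow (T : Fin a → Fin b → Fin (c + 1)) (i v : ℤ) : ℤ :=
  if i < 0 then b
  else if h : i.toNat < a then #{j | v ≤ ((T ⟨i.toNat, h⟩ j : ℕ) : ℤ)}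
  else 0

variable (T : Fin a → Fin b → Fin (c + 1))

lemma sliceRow_of_neg {i : ℤ} (hi : i < 0) (v : ℤ) : sliceRow T i v = b := if_pos hi

lemma sliceRow_of_ge {i : ℤ} (hi : a ≤ i) (v : ℤ) : sliceRow T i v = 0 := by
  rw [sliceRow, if_neg (by omega), dif_neg (by omega)]

lemma sliceRow_natCast (i : Fin a) (v : ℤ) :
    sliceRow T i v = #{j | v ≤ ((T i j : ℕ) : ℤ)} := by
  rw [sliceRow, if_neg (by omega), dif_pos (by simp)]
  simp

lemma sliceRow_nonneg (i v : ℤ) : 0 ≤ sliceRow T i v := by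
  unfold sliceRow; split_ifs <;> positivity

lemma sliceRow_le (i v : ℤ) : sliceRow T i v ≤ b := by
  unfold sliceRow
  split_ifs
  · rfl
  · exact_mod_cast (card_filter_le _ _).trans (card_fin b).le
  · positivity

lemma lt_sliceRow_iff (hrow : ∀ i j j', j ≤ j' → T i j' ≤ T i j) (i : Fin a) (j : Fin b)
    (v : ℤ) : (j : ℤ) < sliceRow T i v ↔ v ≤ ((T i j : ℕ) : ℤ) := by
  rw [sliceRow_natCast, Nat.cast_lt]
  exact Fin.lt_card_filter_univ_iff_apply_of_imp _ fun k k' hk hv =>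
    hv.trans (by exact_mod_cast hrow i k' k hk)

lemma isSliceFunction_sliceRow (hcol : ∀ i i' j, i ≤ i' → T i' j ≤ T i j) :
    IsSliceFunction a b c (sliceRow T) where
  antitone := by
    refine antitone_int_of_succ_le fun i v => ?_
    by_cases hi : i < 0
    · rw [sliceRow_of_neg T hi]; exact sliceRow_le T _ _
    by_cases hi' : a ≤ i + 1
    · rw [sliceRow_of_ge T hi']; exact sliceRow_nonneg T _ _
    obtain ⟨k, rfl⟩ := exists_fin_eq_of_nonneg_of_lt (by omega : 0 ≤ i) (by omega : i < a)
    obtain ⟨k', hk'⟩ :=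
      exists_fin_eq_of_nonneg_of_lt (by omega : 0 ≤ (k : ℤ) + 1) (by omega : (k : ℤ) + 1 < a)
    rw [hk', sliceRow_natCast, sliceRow_natCast, Nat.cast_le]
    refine card_le_card fun j hj => ?_
    simp only [mem_filter, mem_univ, true_and] at hj ⊢
    exact hj.trans (by exact_mod_cast hcol k k' j (by rw [Fin.le_def]; omega))
  antitone_apply i := by
    intro v v' hv
    by_cases hi : i < 0
    · rw [sliceRow_of_neg T hi, sliceRow_of_neg T hi]
    by_cases hi' : a ≤ i
    · rw [sliceRow_of_ge T hi', sliceRow_of_ge T hi']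
    obtain ⟨k, rfl⟩ := exists_fin_eq_of_nonneg_of_lt (by omega : 0 ≤ i) (by omega : i < a)
    rw [sliceRow_natCast, sliceRow_natCast, Nat.cast_le]
    exact card_le_card fun j hj => by simp only [mem_filter, mem_univ, true_and] at hj ⊢; omega
  apply_of_neg _ hi := sliceRow_of_neg T hi
  apply_of_ge _ hi := sliceRow_of_ge T hi
  apply_of_nonpos i hi v hv := by
    by_cases hi' : i < 0
    · exact sliceRow_of_neg T hi' v
    obtain ⟨k, rfl⟩ := exists_fin_eq_of_nonneg_of_lt (by omega : 0 ≤ i) hi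
    rw [sliceRow_natCast, filter_true_of_mem fun j _ => by omega, card_univ, Fintype.card_fin]
  apply_of_gt i hi v hv := by
    by_cases hi' : a ≤ i
    · exact sliceRow_of_ge T hi' v
    obtain ⟨k, rfl⟩ := exists_fin_eq_of_nonneg_of_lt hi (by omega : i < a)
    rw [sliceRow_natCast, filter_false_of_mem fun j _ => ?_, card_empty, Nat.cast_zero]
    have := (T k j).isLt
    omega

end Slices

section OfSlices

variable {a b c : ℕ} {f : ℤ → ℤ → ℤ}

def ofSlices (f : ℤ → ℤ → ℤ) : Fin a → Fin b → Fin (c + 1) := fun i j =>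
  ⟨#{k : Fin c | ((j : ℕ) : ℤ) < f (i : ℕ) ((k : ℕ) + 1)},
    Nat.lt_succ_of_le ((card_filter_le _ _).trans (card_fin c).le)⟩

lemma le_ofSlices_iff (hf : IsSliceFunction a b c f) (i : Fin a) (j : Fin b) (v : ℤ) :
    v ≤ ((ofSlices f i j : Fin (c + 1)) : ℕ) ↔ ((j : ℕ) : ℤ) < f (i : ℕ) v := by
  by_cases hv : v ≤ 0
  · rw [hf.apply_of_nonpos _ (by omega) v hv]
    omega
  by_cases hv' : (c : ℤ) < v
  · rw [hf.apply_of_gt _ (by omega) v hv']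
    have := (ofSlices f i j : Fin (c + 1)).isLt
    omega
  obtain ⟨k, rfl⟩ : ∃ k : Fin c, v = (k : ℕ) + 1 :=
    ⟨⟨(v - 1).toNat, by omega⟩, by simp; omega⟩
  have hk := Fin.lt_card_filter_univ_iff_apply_of_imp (j := k)
    (fun k : Fin c => ((j : ℕ) : ℤ) < f (i : ℕ) ((k : ℕ) + 1)) fun k k' hk h =>
      h.trans_le (hf.antitone_apply (i : ℕ) (by rw [Fin.le_def] at hk; omega))
  simp only [ofSlices] at hk ⊢
  omega

lemma sliceRow_ofSlices (hf : IsSliceFunction a b c f) :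
    sliceRow (ofSlices f : Fin a → Fin b → Fin (c + 1)) = f := by
  funext i v
  by_cases hi : i < 0
  · rw [sliceRow_of_neg _ hi, hf.apply_of_neg i hi]
  by_cases hi' : a ≤ i
  · rw [sliceRow_of_ge _ hi', hf.apply_of_ge i hi']
  obtain ⟨k, rfl⟩ := exists_fin_eq_of_nonneg_of_lt (by omega : 0 ≤ i) (by omega : i < a)
  have hlt : ∀ j : Fin b, ((j : ℕ) : ℤ) < f k v ↔ (j : ℕ) < (f k v).toNat :=
    fun j => by omega
  rw [sliceRow_natCast]
  simp only [le_ofSlices_iff hf, hlt, Fin.card_filter_val_lt]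
  have := hf.le k v
  have := hf.nonneg k v
  omega

lemma ofSlices_mem (hf : IsSliceFunction a b c f) :
    (ofSlices f : Fin a → Fin b → Fin (c + 1)) ∈ PlanePartitions a b c := by
  simp only [PlanePartitions, ofSlices, mem_filter, mem_univ, true_and, Fin.mk_le_mk]
  constructor
  · intro i j j' hj
    exact card_le_card fun k hk => by simp only [mem_filter, mem_univ, true_and] at hk ⊢; omega
  · intro i i' j hi
    refine card_le_card fun k hk => ?_
    simp only [mem_filter, mem_univ, true_and] at hk ⊢
    exact hk.trans_le (hf.antitone (by exact_mod_cast hi) _)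

lemma ofSlices_sliceRow {T : Fin a → Fin b → Fin (c + 1)} (hT : T ∈ PlanePartitions a b c) :
    ofSlices (sliceRow T) = T := by
  simp only [PlanePartitions, mem_filter, mem_univ, true_and] at hT
  funext i j
  refine Fin.ext (Nat.cast_injective (R := ℤ) (eq_of_forall_le_iff fun v => ?_))
  rw [le_ofSlices_iff (isSliceFunction_sliceRow T hT.2), lt_sliceRow_iff T hT.1]

end OfSlices

section BenderKnuth

variable {a b c : ℕ} {T : Fin a → Fin b → Fin (c + 1)} {d : ℤ}

def benderKnuth (d : ℤ) (T : Fin a → Fin b → Fin (c + 1)) : Fin a → Fin b → Fin (c + 1) :=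
  ofSlices (toggleDiag d (sliceRow T))

lemma isSliceFunction_toggleDiag_sliceRow (hT : T ∈ PlanePartitions a b c) (hd₀ : 2 - a ≤ d)
    (hd₁ : d ≤ c) : IsSliceFunction a b c (toggleDiag d (sliceRow T)) :=
  (isSliceFunction_sliceRow T (mem_filter.1 hT).2.2).toggleDiag hd₀ hd₁

lemma benderKnuth_mem (hT : T ∈ PlanePartitions a b c) (hd₀ : 2 - a ≤ d) (hd₁ : d ≤ c) :
    benderKnuth d T ∈ PlanePartitions a b c :=
  ofSlices_mem (isSliceFunction_toggleDiag_sliceRow hT hd₀ hd₁)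

lemma sliceRow_benderKnuth (hT : T ∈ PlanePartitions a b c) (hd₀ : 2 - a ≤ d)
    (hd₁ : d ≤ c) : sliceRow (benderKnuth d T) = toggleDiag d (sliceRow T) :=
  sliceRow_ofSlices (isSliceFunction_toggleDiag_sliceRow hT hd₀ hd₁)

lemma benderKnuth_benderKnuth (hT : T ∈ PlanePartitions a b c) (hd₀ : 2 - a ≤ d)
    (hd₁ : d ≤ c) : benderKnuth d (benderKnuth d T) = T := by
  rw [benderKnuth, sliceRow_benderKnuth hT hd₀ hd₁, toggleDiag_toggleDiag, ofSlices_sliceRow hT]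

end BenderKnuth

section LozengeCount

variable {a b c : ℕ}

def lozengeCount (T : Fin a → Fin b → Fin (c + 1)) (y : ℤ) : ℕ :=
  #{p : Fin a × Fin b | ((T p.1 p.2 : ℕ) : ℤ) + (a : ℤ) - (((p.1 : ℕ) : ℤ) + 1) = y}

lemma diagSum_sliceRow (T : Fin a → Fin b → Fin (c + 1)) (d : ℤ) :
    diagSum a (sliceRow T) d
      = ∑ i : Fin a, (#{j | d + (i : ℕ) ≤ ((T i j : ℕ) : ℤ)} : ℤ) := by
  rw [diagSum, ← Fin.sum_univ_eq_sum_range (fun i => sliceRow T i (d + i))]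
  simp only [sliceRow_natCast]

lemma lozengeCount_eq_diagSum (T : Fin a → Fin b → Fin (c + 1)) (y : ℤ) :
    (lozengeCount T y : ℤ)
      = diagSum a (sliceRow T) (y + 1 - a) - diagSum a (sliceRow T) (y + 2 - a) := by
  have hrow : ∀ i : Fin a, #{j | ((T i j : ℕ) : ℤ) + a - ((i : ℕ) + 1) = y}
      = #{j | ((T i j : ℕ) : ℤ) = y + 1 - a + (i : ℕ)} :=
    fun i => congrArg card (filter_congr fun _ _ => by omega)
  rw [lozengeCount, card_filter, Fintype.sum_prod_type]
  simp only [← card_filter, hrow]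
  rw [diagSum_sliceRow, diagSum_sliceRow, eq_sub_iff_add_eq, Nat.cast_sum, ← sum_add_distrib]
  refine sum_congr rfl fun i _ => ?_
  rw [card_filter_le_eq_card_filter_eq_add univ _ (y + 1 - a + (i : ℕ))]
  push_cast
  ring_nf

lemma lozengeCount_benderKnuth {T : Fin a → Fin b → Fin (c + 1)}
    (hT : T ∈ PlanePartitions a b c) {y : ℤ} (hy₀ : 0 ≤ y) (hy₁ : y + 2 ≤ a + c) :
    lozengeCount (benderKnuth (y + 2 - a) T) y = lozengeCount T (y + 1) := by
  set d := y + 2 - (a : ℤ)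
  have hf := isSliceFunction_sliceRow T (mem_filter.1 hT).2.2
  rw [← Nat.cast_inj (R := ℤ), lozengeCount_eq_diagSum, lozengeCount_eq_diagSum,
    sliceRow_benderKnuth hT (by omega) (by omega), show y + 1 - a = d - 1 by ring,
    show y + 1 + 1 - a = d by ring, show y + 1 + 2 - a = d + 1 by ring,
    diagSum_toggleDiag_of_ne a (by omega), hf.diagSum_toggleDiag]
  ring

lemma sum_lozengeCount_succ {y : ℤ} (hy₀ : 0 ≤ y) (hy₁ : y + 2 ≤ a + c) :
    ∑ T ∈ PlanePartitions a b c, lozengeCount T (y + 1)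
      = ∑ T ∈ PlanePartitions a b c, lozengeCount T y :=
  sum_nbij' (benderKnuth (y + 2 - a)) (benderKnuth (y + 2 - a))
    (fun _ hT => benderKnuth_mem hT (by omega) (by omega))
    (fun _ hT => benderKnuth_mem hT (by omega) (by omega))
    (fun _ hT => benderKnuth_benderKnuth hT (by omega) (by omega))
    (fun _ hT => benderKnuth_benderKnuth hT (by omega) (by omega))
    (fun _ hT => (lozengeCount_benderKnuth hT hy₀ hy₁).symm)

lemma sum_lozengeCount_eq_sum_lozengeCount_zero {y : ℤ} (hy₀ : 0 ≤ y) (hy₁ : y < a + c) :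
    ∑ T ∈ PlanePartitions a b c, lozengeCount T y
      = ∑ T ∈ PlanePartitions a b c, lozengeCount T 0 := by
  induction y, hy₀ using Int.leInduction with
  | base => rfl
  | succ y hy ih => rw [sum_lozengeCount_succ hy (by omega), ih (by omega)]

lemma sum_Ico_lozengeCount (T : Fin a → Fin b → Fin (c + 1)) :
    ∑ y ∈ Ico (0 : ℤ) (a + c), lozengeCount T y = a * b := by
  have h := card_eq_sum_card_fiberwise (s := univ) (t := Ico (0 : ℤ) (a + c))
    (f := fun p : Fin a × Fin b => ((T p.1 p.2 : ℕ) : ℤ) + a - ((p.1 : ℕ) + 1)) fun p _ => by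
      have := (T p.1 p.2).isLt
      have := p.1.isLt
      rw [mem_coe, mem_Ico]; dsimp only
      omega
  rw [card_univ, Fintype.card_prod, Fintype.card_fin, Fintype.card_fin] at h
  exact h.symm

lemma add_mul_sum_lozengeCount {y : ℤ} (hy₀ : 0 ≤ y) (hy₁ : y < a + c) :
    (a + c) * ∑ T ∈ PlanePartitions a b c, lozengeCount T y
      = #(PlanePartitions a b c) * (a * b) :=
  calc (a + c) * ∑ T ∈ PlanePartitions a b c, lozengeCount T y
      = ∑ y ∈ Ico (0 : ℤ) (a + c), ∑ T ∈ PlanePartitions a b c, lozengeCount T y := by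
        rw [sum_congr rfl fun y hy => sum_lozengeCount_eq_sum_lozengeCount_zero
            (mem_Ico.1 hy).1 (mem_Ico.1 hy).2,
          sum_lozengeCount_eq_sum_lozengeCount_zero hy₀ hy₁, sum_const, Int.card_Ico,
          smul_eq_mul, show ((a : ℤ) + c - 0).toNat = a + c by omega]
    _ = #(PlanePartitions a b c) * (a * b) := by
        rw [sum_comm, sum_congr rfl fun T _ => sum_Ico_lozengeCount T, sum_const, smul_eq_mul]

lemma sum_P_eq (y : ℤ) :
    ∑ x ∈ Icc (1 : ℤ) (a + b - 1), P a b c x y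
      = (∑ T ∈ PlanePartitions a b c, lozengeCount T y : ℚ) / #(PlanePartitions a b c) := by
  simp only [P, ← sum_div]
  rw [sum_comm]
  congr 1
  refine sum_congr rfl fun T _ => ?_
  rw [lozengeCount, card_eq_sum_card_fiberwise (t := Icc (1 : ℤ) (a + b - 1))
    (f := fun p : Fin a × Fin b => ((p.2 : ℕ) : ℤ) - ((p.1 : ℕ) : ℤ) + a) fun p _ => ?_,
    Nat.cast_sum]
  · simp only [filter_filter, and_comm]
  · have := p.1.isLt
    have := p.2.isLt
    rw [mem_coe, mem_Icc]; dsimp only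
    omega

end LozengeCount

theorem row_sum_of_probabilities_general (a b c : ℕ)
    (y₀ : ℤ) (hy0 : 0 ≤ y₀) (hy1 : y₀ ≤ (a : ℤ) + c - 1) :
    ∑ x ∈ Finset.Icc (1 : ℤ) ((a : ℤ) + b - 1), P a b c x y₀
      = (a : ℚ) * b / ((a : ℚ) + c) := by
  have hN : 0 < #(PlanePartitions a b c) :=
    card_pos.2 ⟨0, mem_filter.2 ⟨mem_univ _, fun _ _ _ _ => le_rfl, fun _ _ _ _ => le_rfl⟩⟩
  have key := add_mul_sum_lozengeCount (b := b) hy0 (by omega : y₀ < a + c)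
  rw [sum_P_eq, div_eq_div_iff (Nat.cast_ne_zero.2 hN.ne') (by norm_cast; omega),
    mul_comm _ (_ + _)]
  exact_mod_cast key.trans (mul_comm _ _)

theorem row_sum_of_probabilities (a b c : ℕ) (ha : 0 < a) (hb : 0 < b) (hc : 0 < c)
    (y₀ : ℤ) (hy0 : 0 ≤ y₀) (hy1 : y₀ ≤ (a : ℤ) + c - 1) :
    ∑ x ∈ Finset.Icc (1 : ℤ) ((a : ℤ) + b - 1), P a b c x y₀
      = (a : ℚ) * b / ((a : ℚ) + c) :=
  row_sum_of_probabilities_general a b c y₀ hy0 hy1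
end

section
/- Let a, b, c be positive integers with a ≤ b and let x₀ be an integer with 1 ≤ x₀ ≤ a+b−1. Then Σ_{y=0}^{a+c-1} P_{a,b,c}(x₀, y) · (y − (a+c−1)/2) equals (−a² − ab − ac + bc + a·x₀ + b·x₀)·x₀ / (2(a+b)) if 1 ≤ x₀ ≤ a; equals a·c·(a + b − 2x₀) / (2(a+b)) if a ≤ x₀ ≤ b; and equals (−b² − ab − bc + ac + a·x₀ + b·x₀)·(a + b − x₀) / (2(a+b)) if b ≤ x₀ ≤ a+b−1. -/
open Finset

/-!
Extend a plane partition `T` to an antitone function on `ℤ × ℤ` by `c` north-west and `0`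
south-east of the box, and let `columnSum T x` be the sum of this function along the vertical
line `x`. Moving every entry on the line `x` to `upper + lower - entry`, where `[lower, upper]` is
the interval allowed by its neighbours (which lie on the lines `x ± 1`), is an involution of the
plane partitions; by `min + max = sum` and a telescoping sum, `upper + lower` summed along the line
is `columnSum T (x - 1) + columnSum T (x + 1)`. So the total of `columnSum · x` over all plane
partitions is affine on `[0, a + b]`, from `N * a * c` at `0` to `0` at `a + b`, where `N` is the
number of plane partitions. The weighted sum of the theorem is this total over `N`, corrected by
the entries `c` left of the box and by the arithmetic progression coming from the offset `a - i`
in the height of a lozenge.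
-/

lemma sum_range_min_add_max {α : Type*} [AddCommGroup α] [LinearOrder α] [IsOrderedAddMonoid α]
    (p q : ℤ → α) (n : ℕ) (h₀ : p 0 ≤ q (-1)) (hn : p n ≤ q (n - 1)) :
    ∑ i ∈ range n, (min (p i) (q (i - 1)) + max (q i) (p (i + 1)))
      = ∑ i ∈ range n, (p i + q i) := by
  set f : ℤ → α := fun i => max (p i) (q (i - 1)) - q (i - 1)
  have hstep : ∀ i : ℤ, min (p i) (q (i - 1)) + max (q i) (p (i + 1))
      = p i + q i + (f (i + 1) - f i) := by
    intro i
    simp only [f, add_sub_cancel_right]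
    rw [eq_sub_of_add_eq (min_add_max (p i) (q (i - 1))), max_comm (q i)]
    abel
  have hf₀ : f 0 = 0 := by simp [f, max_eq_right h₀]
  have hfn : f n = 0 := by simp [f, max_eq_right hn]
  have htel := sum_range_sub (fun i : ℕ => f i) n
  push_cast at htel
  rw [sum_congr rfl fun (i : ℕ) _ => hstep i, sum_add_distrib, htel, hf₀, hfn, sub_zero, add_zero]

lemma mul_apply_eq_of_two_mul_eq_add {R : Type*} [CommRing R] {f : ℤ → R} {n : ℤ}
    (hf : ∀ x, 1 ≤ x → x ≤ n - 1 → 2 * f x = f (x - 1) + f (x + 1))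
    {x : ℤ} (hx₀ : 0 ≤ x) (hxn : x ≤ n) :
    n * f x = (n - x) * f 0 + x * f n := by
  have linear : ∀ k, 0 ≤ k → k ≤ n - 1 →
      f k = f 0 + k * (f 1 - f 0) ∧ f (k + 1) = f 0 + (k + 1) * (f 1 - f 0) := by
    intro k hk
    induction k, hk using Int.leInduction with
    | base => intro; constructor <;> simp
    | succ k hk ih =>
      intro hkn
      obtain ⟨h₀, h₁⟩ := ih (by omega)
      have h := hf (k + 1) (by omega) hkn
      rw [add_sub_cancel_right] at h
      refine ⟨by push_cast; exact h₁, ?_⟩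
      push_cast
      linear_combination -h + 2 * h₁ - h₀
  rcases hx₀.eq_or_lt with rfl | hx₀
  · simp
  obtain ⟨-, hx⟩ := linear (x - 1) (by omega) (by omega)
  obtain ⟨-, hn⟩ := linear (n - 1) (by omega) (by omega)
  rw [sub_add_cancel] at hx hn
  push_cast at hx hn
  linear_combination (n : R) * hx - (x : R) * hn

lemma sum_fin_ite_eq {M : Type*} [AddCommMonoid M] (n : ℕ) (J : ℤ) (g : ℤ → M) :
    ∑ j : Fin n, (if ((j : ℕ) : ℤ) = J then g j else 0) = if 0 ≤ J ∧ J < n then g J else 0 := by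
  rw [Fin.sum_univ_eq_sum_range (fun j => if (j : ℤ) = J then g j else 0)]
  split_ifs with hJ
  · lift J to ℕ using hJ.1
    simp only [Nat.cast_inj, sum_ite_eq', mem_range]
    rw [if_pos (by omega)]
  · exact sum_eq_zero fun j hj => if_neg (by simp only [mem_range] at hj; omega)

lemma two_mul_sum_Ico_sub_natCast {R : Type*} [CommRing R] (α : R) {l u : ℕ} (h : l ≤ u) :
    2 * ∑ i ∈ Ico l u, (α - i) = 2 * (u - l) * α - (u * (u - 1) - l * (l - 1)) := by
  induction u, h using Nat.le_induction with
  | base => simp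
  | succ u hu ih =>
    rw [sum_Ico_succ_top hu]
    push_cast
    linear_combination ih

namespace PlanePartitions

variable {a b c : ℕ}

/-- Indices are 0-based, whereas the cells `(i, j)` in the definition of `P` are 1-based. -/
def extend (T : Fin a → Fin b → Fin (c + 1)) (i j : ℤ) : ℤ :=
  if hi : 0 ≤ i ∧ i < a then
    if hj : 0 ≤ j ∧ j < b then (T ⟨i.toNat, by omega⟩ ⟨j.toNat, by omega⟩ : ℕ)
    else if j < 0 then c else 0
  else if i < 0 then c else 0

section extend

variable {T : Fin a → Fin b → Fin (c + 1)} {i j : ℤ}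

@[simp]
lemma extend_coe (T : Fin a → Fin b → Fin (c + 1)) (i : Fin a) (j : Fin b) :
    extend T i j = (T i j : ℕ) := by
  simp [extend]

lemma extend_nonneg : 0 ≤ extend T i j := by
  unfold extend; split_ifs <;> positivity

lemma extend_le : extend T i j ≤ c := by
  unfold extend
  split_ifs
  · exact_mod_cast Nat.lt_succ_iff.mp (Fin.is_lt _)
  all_goals omega

lemma extend_of_row_neg (hi : i < 0) : extend T i j = c := by
  unfold extend; split_ifs <;> omega

lemma extend_of_col_neg (hi : i < a) (hj : j < 0) : extend T i j = c := by
  unfold extend; split_ifs <;> omega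

lemma extend_of_row_ge (hi : a ≤ i) : extend T i j = 0 := by
  unfold extend; split_ifs <;> omega

lemma extend_of_col_ge (hi : 0 ≤ i) (hj : b ≤ j) : extend T i j = 0 := by
  unfold extend; split_ifs <;> omega

lemma mem_iff_antitone_extend : T ∈ PlanePartitions a b c ↔
    (∀ i, Antitone (extend T i)) ∧ ∀ j, Antitone fun i => extend T i j := by
  simp only [PlanePartitions, mem_filter, mem_univ, true_and]
  constructor
  · rintro ⟨hrow, hcol⟩
    refine ⟨fun i j j' hj => ?_, fun j i i' hi => ?_⟩
    · unfold extend; split_ifs <;> try omega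
      exact Int.ofNat_le.mpr (hrow _ _ _ (by simp only [Fin.le_def]; omega))
    · show extend T i' j ≤ extend T i j
      unfold extend; split_ifs <;> try omega
      exact Int.ofNat_le.mpr (hcol _ _ _ (by simp only [Fin.le_def]; omega))
  · rintro ⟨hrow, hcol⟩
    refine ⟨fun i j j' hj => ?_, fun i i' j hi => ?_⟩
    · simpa using hrow i (Int.ofNat_le.mpr hj)
    · simpa using hcol j (Int.ofNat_le.mpr hi)

end extend

section toggle

variable {T : Fin a → Fin b → Fin (c + 1)} {x i j : ℤ}

def upper (T : Fin a → Fin b → Fin (c + 1)) (i j : ℤ) : ℤ :=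
  min (extend T i (j - 1)) (extend T (i - 1) j)

def lower (T : Fin a → Fin b → Fin (c + 1)) (i j : ℤ) : ℤ :=
  max (extend T i (j + 1)) (extend T (i + 1) j)

lemma extend_le_upper (hT : T ∈ PlanePartitions a b c) : extend T i j ≤ upper T i j := by
  obtain ⟨hrow, hcol⟩ := mem_iff_antitone_extend.1 hT
  exact le_min (hrow i (by omega)) (hcol j (by omega))

lemma lower_le_extend (hT : T ∈ PlanePartitions a b c) : lower T i j ≤ extend T i j := by
  obtain ⟨hrow, hcol⟩ := mem_iff_antitone_extend.1 hT
  exact max_le (hrow i (by omega)) (hcol j (by omega))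

/-- Reflects each entry on the line `x` (cells with `j - i + a = x`) inside the interval
`[lower, upper]` that its neighbours, all off that line, allow. The clamp to `[0, c]` only
matters when `T` is not a plane partition. -/
def toggle (x : ℤ) (T : Fin a → Fin b → Fin (c + 1)) : Fin a → Fin b → Fin (c + 1) :=
  fun i j => if (j : ℤ) - i + a = x then
    ⟨min (upper T i j + lower T i j - (T i j : ℕ)).toNat c, by omega⟩
  else T i j

lemma extend_toggle_eq_self (h : j - i + a ≠ x ∨ ¬(0 ≤ i ∧ i < a ∧ 0 ≤ j ∧ j < b)) :
    extend (toggle x T) i j = extend T i j := by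
  unfold extend
  split_ifs <;> try rfl
  simp only [toggle]
  rw [if_neg (by omega)]

lemma extend_toggle_of_mem (hT : T ∈ PlanePartitions a b c) (hx : j - i + a = x)
    (hi : 0 ≤ i) (hia : i < a) (hj : 0 ≤ j) (hjb : j < b) :
    extend (toggle x T) i j = upper T i j + lower T i j - extend T i j := by
  have h₁ := extend_le_upper hT (i := i) (j := j)
  have h₂ := lower_le_extend hT (i := i) (j := j)
  have h₃ : upper T i j ≤ c := (min_le_left _ _).trans extend_le
  have h₄ : 0 ≤ lower T i j := extend_nonneg.trans (le_max_left _ _)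
  obtain ⟨i, rfl⟩ : ∃ i' : Fin a, ((i' : ℕ) : ℤ) = i := ⟨⟨i.toNat, by omega⟩, by simp; omega⟩
  obtain ⟨j, rfl⟩ : ∃ j' : Fin b, ((j' : ℕ) : ℤ) = j := ⟨⟨j.toNat, by omega⟩, by simp; omega⟩
  simp only [extend_coe] at *
  simp only [toggle, if_pos hx]
  omega

lemma upper_add_lower_of_not_mem (hx₁ : 1 ≤ x) (hx₂ : x ≤ a + b - 1) (hx : j - i + a = x)
    (h : ¬(0 ≤ i ∧ i < a ∧ 0 ≤ j ∧ j < b)) :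
    upper T i j + lower T i j = 2 * extend T i j := by
  unfold upper lower
  rcases (by omega : i < 0 ∨ a ≤ i ∨ (i + 1 < a ∧ j < 0) ∨ (1 ≤ i ∧ b ≤ j))
    with hi | hi | ⟨hi, hj⟩ | ⟨hi, hj⟩
  · have := extend_le (T := T) (i := i + 1) (j := j)
    simp only [extend_of_row_neg hi, extend_of_row_neg (show i - 1 < 0 by omega)]
    omega
  · have := extend_nonneg (T := T) (i := i - 1) (j := j)
    simp only [extend_of_row_ge hi, extend_of_row_ge (show a ≤ i + 1 by omega)]
    omega
  · have := extend_le (T := T) (i := i) (j := j + 1)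
    rw [extend_of_col_neg (by omega) (by omega : j - 1 < 0), extend_of_col_neg (by omega) hj,
      extend_of_col_neg hi hj, extend_of_col_neg (by omega) hj]
    omega
  · have := extend_nonneg (T := T) (i := i) (j := j - 1)
    rw [extend_of_col_ge (by omega) (by omega : b ≤ j + 1), extend_of_col_ge (by omega) hj,
      extend_of_col_ge (by omega) hj, extend_of_col_ge (by omega) hj]
    omega

lemma extend_add_extend_toggle (hT : T ∈ PlanePartitions a b c) (hx₁ : 1 ≤ x)
    (hx₂ : x ≤ a + b - 1) (hx : j - i + a = x) :
    extend T i j + extend (toggle x T) i j = upper T i j + lower T i j := by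
  by_cases h : 0 ≤ i ∧ i < a ∧ 0 ≤ j ∧ j < b
  · rw [extend_toggle_of_mem hT hx h.1 h.2.1 h.2.2.1 h.2.2.2]
    ring
  · rw [extend_toggle_eq_self (Or.inr h), upper_add_lower_of_not_mem hx₁ hx₂ hx h]
    ring

lemma extend_toggle_mem_Icc (hT : T ∈ PlanePartitions a b c) (hx : j - i + a = x) :
    extend (toggle x T) i j ∈ Set.Icc (lower T i j) (upper T i j) := by
  have h₁ := extend_le_upper hT (i := i) (j := j)
  have h₂ := lower_le_extend hT (i := i) (j := j)
  by_cases h : 0 ≤ i ∧ i < a ∧ 0 ≤ j ∧ j < b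
  · rw [extend_toggle_of_mem hT hx h.1 h.2.1 h.2.2.1 h.2.2.2]
    constructor <;> omega
  · rw [extend_toggle_eq_self (Or.inr h)]
    exact ⟨h₂, h₁⟩

lemma toggle_mem (hT : T ∈ PlanePartitions a b c) : toggle x T ∈ PlanePartitions a b c := by
  obtain ⟨hrow, hcol⟩ := mem_iff_antitone_extend.1 hT
  refine mem_iff_antitone_extend.2
    ⟨fun i => antitone_int_of_succ_le fun j => ?_, fun j => antitone_int_of_succ_le fun i => ?_⟩
  · by_cases h : j - i + a = x
    · rw [extend_toggle_eq_self (Or.inl (by omega : j + 1 - i + a ≠ x))]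
      exact (le_max_left _ _).trans (extend_toggle_mem_Icc hT h).1
    by_cases h' : j + 1 - i + a = x
    · rw [extend_toggle_eq_self (Or.inl h)]
      refine (extend_toggle_mem_Icc hT h').2.trans ?_
      simpa only [upper, add_sub_cancel_right] using min_le_left _ _
    · rw [extend_toggle_eq_self (Or.inl h), extend_toggle_eq_self (Or.inl h')]
      exact hrow i (by omega)
  · show extend (toggle x T) (i + 1) j ≤ extend (toggle x T) i j
    by_cases h : j - i + a = x
    · rw [extend_toggle_eq_self (Or.inl (by omega : j - (i + 1) + a ≠ x))]
      exact (le_max_right _ _).trans (extend_toggle_mem_Icc hT h).1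
    by_cases h' : j - (i + 1) + a = x
    · rw [extend_toggle_eq_self (Or.inl h)]
      refine (extend_toggle_mem_Icc hT h').2.trans ?_
      simpa only [upper, add_sub_cancel_right] using min_le_right _ _
    · rw [extend_toggle_eq_self (Or.inl h), extend_toggle_eq_self (Or.inl h')]
      exact hcol j (by omega)

lemma upper_toggle (hx : j - i + a = x) : upper (toggle x T) i j = upper T i j := by
  rw [upper, upper, extend_toggle_eq_self (Or.inl (by omega)),
    extend_toggle_eq_self (Or.inl (by omega))]

lemma lower_toggle (hx : j - i + a = x) : lower (toggle x T) i j = lower T i j := by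
  rw [lower, lower, extend_toggle_eq_self (Or.inl (by omega)),
    extend_toggle_eq_self (Or.inl (by omega))]

lemma toggle_toggle (hT : T ∈ PlanePartitions a b c) : toggle x (toggle x T) = T := by
  suffices h : ∀ i j, extend (toggle x (toggle x T)) i j = extend T i j by
    funext i j
    exact Fin.ext (by exact_mod_cast (by simpa using h i j))
  intro i j
  by_cases h : j - i + a = x ∧ 0 ≤ i ∧ i < a ∧ 0 ≤ j ∧ j < b
  · obtain ⟨hx, hi, hia, hj, hjb⟩ := h
    rw [extend_toggle_of_mem (toggle_mem hT) hx hi hia hj hjb, upper_toggle hx, lower_toggle hx,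
      extend_toggle_of_mem hT hx hi hia hj hjb]
    ring
  · rw [extend_toggle_eq_self (by tauto), extend_toggle_eq_self (by tauto)]

end toggle

def columnSum (T : Fin a → Fin b → Fin (c + 1)) (x : ℤ) : ℤ :=
  ∑ i ∈ range a, extend T i (x - a + i)

section columnSum

variable {T : Fin a → Fin b → Fin (c + 1)} {x : ℤ}

lemma columnSum_add_columnSum_toggle (hT : T ∈ PlanePartitions a b c) (hx₁ : 1 ≤ x)
    (hx₂ : x ≤ a + b - 1) :
    columnSum T x + columnSum (toggle x T) x = columnSum T (x - 1) + columnSum T (x + 1) := by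
  have htel := sum_range_min_add_max (fun i => extend T i (x - 1 - a + i))
    (fun i => extend T i (x + 1 - a + i)) a
    (extend_le.trans_eq (extend_of_row_neg (by norm_num)).symm)
    ((extend_of_row_ge le_rfl).trans_le extend_nonneg)
  simp only [columnSum, ← sum_add_distrib]
  convert htel using 2 with i
  rw [extend_add_extend_toggle hT hx₁ hx₂ (by ring), upper, lower]
  ring_nf

lemma columnSum_zero (T : Fin a → Fin b → Fin (c + 1)) : columnSum T 0 = a * c := by
  rw [columnSum, sum_congr rfl fun i hi => extend_of_col_neg (by simpa using hi)
    (by simp only [mem_range] at hi; omega)]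
  simp

lemma columnSum_add (T : Fin a → Fin b → Fin (c + 1)) : columnSum T (a + b) = 0 := by
  rw [columnSum, sum_congr rfl fun i _ => extend_of_col_ge (by positivity) (by omega)]
  simp

end columnSum

def columnTotal (a b c : ℕ) (x : ℤ) : ℤ :=
  ∑ T ∈ PlanePartitions a b c, columnSum T x

lemma sum_columnSum_toggle (x : ℤ) :
    ∑ T ∈ PlanePartitions a b c, columnSum (toggle x T) x = columnTotal a b c x :=
  sum_nbij' (toggle x) (toggle x) (fun _ hT => toggle_mem hT) (fun _ hT => toggle_mem hT)
    (fun _ hT => toggle_toggle hT) (fun _ hT => toggle_toggle hT) fun _ _ => rfl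

lemma two_mul_columnTotal {x : ℤ} (hx₁ : 1 ≤ x) (hx₂ : x ≤ a + b - 1) :
    2 * columnTotal a b c x = columnTotal a b c (x - 1) + columnTotal a b c (x + 1) := by
  have h := sum_congr (s₁ := PlanePartitions a b c) rfl fun T hT =>
    columnSum_add_columnSum_toggle (x := x) hT hx₁ hx₂
  rw [sum_add_distrib, sum_add_distrib, sum_columnSum_toggle] at h
  rw [two_mul]
  exact h

lemma add_mul_columnTotal {x : ℤ} (hx₀ : 0 ≤ x) (hx₁ : x ≤ a + b) :
    (a + b) * columnTotal a b c x = #(PlanePartitions a b c) * (a * c) * (a + b - x) := by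
  have h := mul_apply_eq_of_two_mul_eq_add (f := columnTotal a b c) (n := a + b)
    (fun y hy₁ hy₂ => two_mul_columnTotal hy₁ hy₂) hx₀ hx₁
  simp only [columnTotal, columnSum_zero, columnSum_add, sum_const, nsmul_eq_mul,
    Int.cast_id] at h ⊢
  linear_combination h

/-- The cells of the `a × b` box whose horizontal lozenge has lowest vertex on the vertical
line `x`. -/
def line (a b : ℕ) (x : ℤ) : Finset (Fin a × Fin b) :=
  univ.filter fun p => ((p.2 : ℕ) : ℤ) - ((p.1 : ℕ) : ℤ) + (a : ℤ) = x

lemma sum_line {M : Type*} [AddCommMonoid M] (x : ℤ) (F : ℤ → ℤ → M) :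
    ∑ p ∈ line a b x, F p.1 p.2
      = ∑ i ∈ Ico (a - x).toNat (min a (a + b - x).toNat), F i (x - a + i) := by
  have hrow : ∀ i : Fin a, (∑ j : Fin b,
      if ((j : ℕ) : ℤ) - ((i : ℕ) : ℤ) + a = x then F i j else 0)
      = if 0 ≤ x - a + i ∧ x - a + i < b then F i (x - a + i) else 0 := fun i =>
    (sum_congr rfl fun j _ => by split_ifs <;> first | rfl | omega).trans
      (sum_fin_ite_eq b _ (F i))
  rw [line, sum_filter, Fintype.sum_prod_type, sum_congr rfl fun i _ => hrow i,
    Fin.sum_univ_eq_sum_range (fun i => if 0 ≤ x - a + i ∧ x - a + i < b then F i (x - a + i)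
      else 0), ← sum_filter]
  congr 1
  ext i
  simp only [mem_filter, mem_range, mem_Ico]
  omega

lemma sum_P_mul (x : ℤ) (w : ℤ → ℚ) :
    ∑ y ∈ Icc (0 : ℤ) (a + c - 1), P a b c x y * w y
      = (∑ T ∈ PlanePartitions a b c, ∑ p ∈ line a b x,
          w (((T p.1 p.2 : ℕ) : ℤ) + a - (((p.1 : ℕ) : ℤ) + 1)))
        / #(PlanePartitions a b c) := by
  simp only [P, div_mul_eq_mul_div, ← sum_div, sum_mul]
  rw [sum_comm]
  congr 1
  refine sum_congr rfl fun T _ => ?_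
  rw [← sum_fiberwise_of_maps_to (s := line a b x) (t := Icc (0 : ℤ) (a + c - 1))
    (g := fun p => ((T p.1 p.2 : ℕ) : ℤ) + a - (((p.1 : ℕ) : ℤ) + 1)) fun p _ => by
    have := (T p.1 p.2).isLt
    have := p.1.isLt
    simp only [mem_Icc]
    omega]
  refine sum_congr rfl fun y _ => ?_
  rw [← filter_filter, ← line, sum_congr rfl fun p hp => by rw [(mem_filter.1 hp).2], sum_const,
    nsmul_eq_mul]

lemma columnSum_eq_sum_Ico (T : Fin a → Fin b → Fin (c + 1)) {x : ℤ} (hx₀ : 0 ≤ x)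
    (hx₁ : x ≤ a + b) :
    columnSum T x = (a - x).toNat * c
      + ∑ i ∈ Ico (a - x).toNat (min a (a + b - x).toNat), extend T i (x - a + i) := by
  have hlo : (a - x).toNat ≤ min a (a + b - x).toNat := by omega
  have hhi : min a (a + b - x).toNat ≤ a := min_le_left _ _
  have hleft : ∑ i ∈ range (a - x).toNat, extend T i (x - a + i) = (a - x).toNat * c := by
    rw [sum_congr rfl fun i hi => extend_of_col_neg (by simp only [mem_range] at hi; omega)
      (by simp only [mem_range] at hi; omega)]
    simp
  have hright : ∑ i ∈ Ico (min a (a + b - x).toNat) a, extend T i (x - a + i) = 0 :=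
    sum_eq_zero fun i hi => extend_of_col_ge (by positivity)
      (by simp only [mem_Ico] at hi; omega)
  rw [columnSum, ← sum_range_add_sum_Ico _ (hlo.trans hhi), ← sum_Ico_consecutive _ hlo hhi,
    hleft, hright, add_zero]

lemma sum_line_sub (T : Fin a → Fin b → Fin (c + 1)) (μ : ℚ) {x : ℤ} (hx₀ : 0 ≤ x)
    (hx₁ : x ≤ a + b) :
    ∑ p ∈ line a b x, ((((T p.1 p.2 : ℕ) : ℤ) + a - (((p.1 : ℕ) : ℤ) + 1) : ℤ) - μ)
      = columnSum T x - (a - x).toNat * c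
        + ∑ i ∈ Ico (a - x).toNat (min a (a + b - x).toNat), ((a : ℚ) - 1 - μ - i) := by
  have h := sum_line (a := a) (b := b) x fun i j => (extend T i j : ℚ) + ((a : ℚ) - 1 - μ - i)
  simp only [extend_coe] at h
  rw [columnSum_eq_sum_Ico T hx₀ hx₁]
  push_cast at h ⊢
  rw [add_sub_cancel_left, ← sum_add_distrib, ← h]
  exact sum_congr rfl fun p _ => by ring

lemma sum_P_mul_sub {x : ℤ} (hx₁ : 1 ≤ x) (hx₂ : x ≤ a + b - 1) (μ : ℚ) {lo hi : ℤ}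
    (hlo : max (a - x) 0 = lo) (hhi : min (a : ℤ) (a + b - x) = hi) :
    ∑ y ∈ Icc (0 : ℤ) (a + c - 1), P a b c x y * (y - μ)
      = a * c * (a + b - x) / (a + b) - c * lo + (hi - lo) * (a - 1 - μ)
        - (hi * (hi - 1) - lo * (lo - 1)) / 2 := by
  have hN : (#(PlanePartitions a b c) : ℚ) ≠ 0 := by
    exact_mod_cast (card_pos.2 ⟨fun _ _ => 0, by simp [PlanePartitions]⟩).ne'
  have hab : (a : ℚ) + b ≠ 0 := by exact_mod_cast (by omega : a + b ≠ 0)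
  have htotal := add_mul_columnTotal (a := a) (b := b) (c := c) (x := x) (by omega) (by omega)
  have hlo' : (((a - x).toNat : ℕ) : ℚ) = lo := by
    exact_mod_cast (by omega : (((a - x).toNat : ℕ) : ℤ) = lo)
  have hhi' : ((min a (a + b - x).toNat : ℕ) : ℚ) = hi := by
    exact_mod_cast (by omega : ((min a (a + b - x).toNat : ℕ) : ℤ) = hi)
  have hgauss := two_mul_sum_Ico_sub_natCast ((a : ℚ) - 1 - μ) (by omega :
    (a - x).toNat ≤ min a (a + b - x).toNat)
  rw [hlo', hhi'] at hgauss
  rw [sum_P_mul, sum_congr rfl fun T _ => sum_line_sub T μ (by omega) (by omega),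
    sum_add_distrib, sum_sub_distrib, sum_const, sum_const, nsmul_eq_mul, nsmul_eq_mul, hlo']
  have hS : ∑ T ∈ PlanePartitions a b c, (columnSum T x : ℚ)
      = #(PlanePartitions a b c) * (a * c * (a + b - x) / (a + b)) := by
    have h : ((a : ℚ) + b) * ∑ T ∈ PlanePartitions a b c, (columnSum T x : ℚ)
        = #(PlanePartitions a b c) * (a * c) * (a + b - x) := by
      exact_mod_cast htotal
    field_simp
    linear_combination h
  have hG : ∑ i ∈ Ico (a - x).toNat (min a (a + b - x).toNat), ((a : ℚ) - 1 - μ - i)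
      = (hi - lo) * (a - 1 - μ) - (hi * (hi - 1) - lo * (lo - 1)) / 2 := by
    linear_combination hgauss / 2
  rw [hS, hG]
  field_simp
  ring

end PlanePartitions

theorem weighted_column_sum_a_le_b_general (a b c : ℕ)
    (hab : a ≤ b) (x₀ : ℤ) (hx0 : 1 ≤ x₀) (hx1 : x₀ ≤ (a : ℤ) + b - 1) :
    (1 ≤ x₀ → x₀ ≤ (a : ℤ) →
      ∑ y ∈ Finset.Icc (0 : ℤ) ((a : ℤ) + c - 1),
          P a b c x₀ y * ((y : ℚ) - ((a : ℚ) + c - 1) / 2)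
        = (-(a : ℚ) ^ 2 - a * b - a * c + b * c + a * (x₀ : ℚ) + b * (x₀ : ℚ)) * (x₀ : ℚ)
            / (2 * ((a : ℚ) + b))) ∧
    ((a : ℤ) ≤ x₀ → x₀ ≤ (b : ℤ) →
      ∑ y ∈ Finset.Icc (0 : ℤ) ((a : ℤ) + c - 1),
          P a b c x₀ y * ((y : ℚ) - ((a : ℚ) + c - 1) / 2)
        = (a : ℚ) * c * ((a : ℚ) + b - 2 * (x₀ : ℚ)) / (2 * ((a : ℚ) + b))) ∧
    ((b : ℤ) ≤ x₀ → x₀ ≤ (a : ℤ) + b - 1 →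
      ∑ y ∈ Finset.Icc (0 : ℤ) ((a : ℤ) + c - 1),
          P a b c x₀ y * ((y : ℚ) - ((a : ℚ) + c - 1) / 2)
        = (-(b : ℚ) ^ 2 - a * b - b * c + a * c + a * (x₀ : ℚ) + b * (x₀ : ℚ))
            * ((a : ℚ) + b - (x₀ : ℚ)) / (2 * ((a : ℚ) + b))) := by
  have hab₀ : (a : ℚ) + b ≠ 0 := by exact_mod_cast (by omega : a + b ≠ 0)
  refine ⟨fun _ hxa => ?_, fun hax hxb => ?_, fun hbx _ => ?_⟩
  · rw [PlanePartitions.sum_P_mul_sub hx0 hx1 _ (lo := a - x₀) (hi := a) (by omega) (by omega)]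
    push_cast
    field_simp
    ring
  · rw [PlanePartitions.sum_P_mul_sub hx0 hx1 _ (lo := 0) (hi := a) (by omega) (by omega)]
    push_cast
    field_simp
    ring
  · rw [PlanePartitions.sum_P_mul_sub hx0 hx1 _ (lo := 0) (hi := a + b - x₀) (by omega) (by omega)]
    push_cast
    field_simp
    ring

theorem weighted_column_sum_a_le_b (a b c : ℕ) (ha : 0 < a) (hb : 0 < b) (hc : 0 < c)
    (hab : a ≤ b) (x₀ : ℤ) (hx0 : 1 ≤ x₀) (hx1 : x₀ ≤ (a : ℤ) + b - 1) :
    (1 ≤ x₀ → x₀ ≤ (a : ℤ) →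
      ∑ y ∈ Finset.Icc (0 : ℤ) ((a : ℤ) + c - 1),
          P a b c x₀ y * ((y : ℚ) - ((a : ℚ) + c - 1) / 2)
        = (-(a : ℚ) ^ 2 - a * b - a * c + b * c + a * (x₀ : ℚ) + b * (x₀ : ℚ)) * (x₀ : ℚ)
            / (2 * ((a : ℚ) + b))) ∧
    ((a : ℤ) ≤ x₀ → x₀ ≤ (b : ℤ) →
      ∑ y ∈ Finset.Icc (0 : ℤ) ((a : ℤ) + c - 1),
          P a b c x₀ y * ((y : ℚ) - ((a : ℚ) + c - 1) / 2)
        = (a : ℚ) * c * ((a : ℚ) + b - 2 * (x₀ : ℚ)) / (2 * ((a : ℚ) + b))) ∧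
    ((b : ℤ) ≤ x₀ → x₀ ≤ (a : ℤ) + b - 1 →
      ∑ y ∈ Finset.Icc (0 : ℤ) ((a : ℤ) + c - 1),
          P a b c x₀ y * ((y : ℚ) - ((a : ℚ) + c - 1) / 2)
        = (-(b : ℚ) ^ 2 - a * b - b * c + a * c + a * (x₀ : ℚ) + b * (x₀ : ℚ))
            * ((a : ℚ) + b - (x₀ : ℚ)) / (2 * ((a : ℚ) + b))) :=
  weighted_column_sum_a_le_b_general a b c hab x₀ hx0 hx1
end

section
/- Let n, m be positive integers and let x₀ be an integer with 1 ≤ x₀ ≤ 2n−1. Then Σ_{y=0}^{n+m-1} P_{n,n,m}(x₀, y) · (y − (n+m−1)/2) equals (1/2)·(x₀ − n)·x₀ if 1 ≤ x₀ ≤ n, and equals (1/2)·(x₀ − n)·(2n − x₀) if n ≤ x₀ ≤ 2n−1. -/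
open Finset

/-!
Averaged over a uniform plane partition, the sum is the expected total of `y - (n + m - 1) / 2`
over the horizontal lozenges on the vertical line `x₀`. The reflection of the hexagon that maps
every vertical line to itself (anti-transpose the cells, complement the entries) sends a lozenge
at height `y` on that line to height `x₀ + m - 1 - y`, so the expected total height is
`(x₀ + m - 1) / 2` times the number `min x₀ (2n - x₀)` of lozenges on the line.
-/

lemma planePartitions_nonempty (a b c : ℕ) : (PlanePartitions a b c).Nonempty :=
  ⟨fun _ _ => 0, by simp [PlanePartitions]⟩

/-- The cells of the `a × b` rectangle whose horizontal lozenges lie on the vertical line `x`. -/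
def diagonalCells (a b : ℕ) (x : ℤ) : Finset (Fin a × Fin b) :=
  univ.filter fun p => ((p.2 : ℕ) : ℤ) - ((p.1 : ℕ) : ℤ) + a = x

def lozengeHeight {a b c : ℕ} (T : Fin a → Fin b → Fin (c + 1)) (p : Fin a × Fin b) : ℤ :=
  ((T p.1 p.2 : ℕ) : ℤ) + a - (((p.1 : ℕ) : ℤ) + 1)

lemma lozengeHeight_mem_Icc {a b c : ℕ} (T : Fin a → Fin b → Fin (c + 1)) (p : Fin a × Fin b) :
    lozengeHeight T p ∈ Icc (0 : ℤ) (a + c - 1) := by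
  have := (T p.1 p.2).is_le
  have := p.1.isLt
  simp only [lozengeHeight, mem_Icc]
  omega

lemma sum_Icc_P_mul (a b c : ℕ) (x : ℤ) (f : ℤ → ℚ) :
    ∑ y ∈ Icc (0 : ℤ) (a + c - 1), P a b c x y * f y
      = (∑ T ∈ PlanePartitions a b c, ∑ p ∈ diagonalCells a b x, f (lozengeHeight T p))
          / (PlanePartitions a b c).card := by
  simp only [P, div_mul_eq_mul_div, ← sum_div, sum_mul]
  rw [sum_comm]
  congr 1
  refine sum_congr rfl fun T _ => ?_
  rw [← sum_fiberwise_of_maps_to fun p _ => lozengeHeight_mem_Icc T p]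
  refine sum_congr rfl fun y _ => ?_
  rw [diagonalCells, filter_filter,
    sum_congr rfl fun p hp => congrArg f (mem_filter.mp hp).2.2, sum_const, nsmul_eq_mul]
  rfl

section Square

variable {a c : ℕ}

def antiTranspose (p : Fin a × Fin a) : Fin a × Fin a := (p.2.rev, p.1.rev)

lemma antiTranspose_antiTranspose (p : Fin a × Fin a) : antiTranspose (antiTranspose p) = p := by
  simp [antiTranspose]

lemma antiTranspose_mem_diagonalCells {x : ℤ} {p : Fin a × Fin a} (hp : p ∈ diagonalCells a a x) :
    antiTranspose p ∈ diagonalCells a a x := by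
  simp only [diagonalCells, antiTranspose, mem_filter, mem_univ, true_and, Fin.val_rev] at hp ⊢
  omega

/-- The reflection of the hexagon that maps each vertical line to itself. -/
def complementAntiTranspose (T : Fin a → Fin a → Fin (c + 1)) : Fin a → Fin a → Fin (c + 1) :=
  fun i j => (T j.rev i.rev).rev

lemma complementAntiTranspose_involutive :
    Function.Involutive (complementAntiTranspose (a := a) (c := c)) := by
  intro T
  funext i j
  simp [complementAntiTranspose]

lemma complementAntiTranspose_mem {T : Fin a → Fin a → Fin (c + 1)}
    (hT : T ∈ PlanePartitions a a c) : complementAntiTranspose T ∈ PlanePartitions a a c := by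
  simp only [PlanePartitions, mem_filter, mem_univ, true_and] at hT ⊢
  obtain ⟨hrow, hcol⟩ := hT
  refine ⟨fun i j j' hj => ?_, fun i i' j hi => ?_⟩
  · simpa [complementAntiTranspose] using hcol _ _ _ (Fin.rev_le_rev.mpr hj)
  · simpa [complementAntiTranspose] using hrow _ _ _ (Fin.rev_le_rev.mpr hi)

lemma lozengeHeight_add_lozengeHeight_complementAntiTranspose (T : Fin a → Fin a → Fin (c + 1))
    (p : Fin a × Fin a) :
    lozengeHeight T p + lozengeHeight (complementAntiTranspose T) (antiTranspose p)
      = (p.2 : ℤ) - p.1 + a + c - 1 := by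
  have := (T p.1 p.2).is_le
  simp only [lozengeHeight, complementAntiTranspose, antiTranspose, Fin.rev_rev, Fin.val_rev]
  omega

lemma two_mul_sum_sum_lozengeHeight (x : ℤ) :
    2 * ∑ T ∈ PlanePartitions a a c, ∑ p ∈ diagonalCells a a x, lozengeHeight T p
      = #(PlanePartitions a a c) * #(diagonalCells a a x) * (x + c - 1) := by
  have hreindex : ∑ T ∈ PlanePartitions a a c, ∑ p ∈ diagonalCells a a x, lozengeHeight T p
      = ∑ T ∈ PlanePartitions a a c, ∑ p ∈ diagonalCells a a x,
          lozengeHeight (complementAntiTranspose T) (antiTranspose p) := by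
    refine sum_nbij' complementAntiTranspose complementAntiTranspose
      (fun T hT => complementAntiTranspose_mem hT) (fun T hT => complementAntiTranspose_mem hT)
      (fun T _ => complementAntiTranspose_involutive T)
      (fun T _ => complementAntiTranspose_involutive T) fun T _ => ?_
    refine sum_nbij' antiTranspose antiTranspose (fun p => antiTranspose_mem_diagonalCells)
      (fun p => antiTranspose_mem_diagonalCells) (fun p _ => antiTranspose_antiTranspose p)
      (fun p _ => antiTranspose_antiTranspose p) fun p _ => ?_
    rw [complementAntiTranspose_involutive, antiTranspose_antiTranspose]
  rw [two_mul]
  nth_rw 2 [hreindex]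
  have hdiag : ∀ p ∈ diagonalCells a a x, (p.2 : ℤ) - p.1 + a + c - 1 = x + c - 1 := by
    intro p hp
    rw [(mem_filter.mp hp).2]
  simp only [← sum_add_distrib, lozengeHeight_add_lozengeHeight_complementAntiTranspose,
    sum_congr rfl hdiag, sum_const, nsmul_eq_mul]
  ring

lemma card_diagonalCells (x : ℤ) :
    #(diagonalCells a a x) = (min (a : ℤ) (2 * a - x) - max 0 (a - x)).toNat := by
  rw [← Int.card_Ico]
  refine card_bij (fun p _ => (p.1 : ℤ)) (fun p hp => ?_) (fun p hp q hq hpq => ?_) fun i hi => ?_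
  · simp only [diagonalCells, mem_filter, mem_univ, true_and] at hp
    simp only [mem_Ico]
    omega
  · simp only [diagonalCells, mem_filter, mem_univ, true_and] at hp hq
    ext <;> omega
  · simp only [mem_Ico] at hi
    refine ⟨(⟨i.toNat, by omega⟩, ⟨(i + x - a).toNat, by omega⟩), ?_, by simp only [Int.ofNat_toNat]; omega⟩
    simp only [diagonalCells, mem_filter, mem_univ, true_and]
    omega

end Square

lemma sum_Icc_P_mul_sub_center (n m : ℕ) (x : ℤ) :
    ∑ y ∈ Icc (0 : ℤ) (n + m - 1), P n n m x y * ((y : ℚ) - ((n : ℚ) + m - 1) / 2)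
      = #(diagonalCells n n x) * ((x : ℚ) - n) / 2 := by
  have hN : (#(PlanePartitions n n m) : ℚ) ≠ 0 := by
    exact_mod_cast (planePartitions_nonempty n n m).card_ne_zero
  have hsym := congrArg (Int.cast : ℤ → ℚ) (two_mul_sum_sum_lozengeHeight (a := n) (c := m) x)
  push_cast at hsym
  rw [sum_Icc_P_mul, div_eq_iff hN]
  simp only [sum_sub_distrib, sum_const, nsmul_eq_mul]
  linear_combination hsym / 2

theorem weighted_column_sum_symmetric_case_general (n m : ℕ) (x₀ : ℤ) :
    (1 ≤ x₀ → x₀ ≤ (n : ℤ) →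
      ∑ y ∈ Finset.Icc (0 : ℤ) ((n : ℤ) + m - 1),
          P n n m x₀ y * ((y : ℚ) - ((n : ℚ) + m - 1) / 2)
        = (1 / 2 : ℚ) * ((x₀ : ℚ) - n) * (x₀ : ℚ)) ∧
    ((n : ℤ) ≤ x₀ → x₀ ≤ 2 * (n : ℤ) - 1 →
      ∑ y ∈ Finset.Icc (0 : ℤ) ((n : ℤ) + m - 1),
          P n n m x₀ y * ((y : ℚ) - ((n : ℚ) + m - 1) / 2)
        = (1 / 2 : ℚ) * ((x₀ : ℚ) - n) * (2 * (n : ℚ) - (x₀ : ℚ))) := by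
  have hcard := card_diagonalCells (a := n) x₀
  rw [sum_Icc_P_mul_sub_center]
  constructor
  · intro h1 h2
    rw [show (#(diagonalCells n n x₀) : ℚ) = x₀ by exact_mod_cast (show _ = x₀ by omega)]
    ring
  · intro h1 h2
    rw [show (#(diagonalCells n n x₀) : ℚ) = 2 * n - x₀ by
      exact_mod_cast (show _ = 2 * (n : ℤ) - x₀ by omega)]
    ring

theorem weighted_column_sum_symmetric_case (n m : ℕ) (hn : 0 < n) (hm : 0 < m)
    (x₀ : ℤ) (hx0 : 1 ≤ x₀) (hx1 : x₀ ≤ 2 * (n : ℤ) - 1) :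
    (1 ≤ x₀ → x₀ ≤ (n : ℤ) →
      ∑ y ∈ Finset.Icc (0 : ℤ) ((n : ℤ) + m - 1),
          P n n m x₀ y * ((y : ℚ) - ((n : ℚ) + m - 1) / 2)
        = (1 / 2 : ℚ) * ((x₀ : ℚ) - n) * (x₀ : ℚ)) ∧
    ((n : ℤ) ≤ x₀ → x₀ ≤ 2 * (n : ℤ) - 1 →
      ∑ y ∈ Finset.Icc (0 : ℤ) ((n : ℤ) + m - 1),
          P n n m x₀ y * ((y : ℚ) - ((n : ℚ) + m - 1) / 2)
        = (1 / 2 : ℚ) * ((x₀ : ℚ) - n) * (2 * (n : ℚ) - (x₀ : ℚ))) :=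
  weighted_column_sum_symmetric_case_general n m x₀
end
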